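/- Under the setting of the previous statement, suppose additionally that the dual update λ⁺ = λ − γρ(∑_{i=1}^N A_i x_i⁺ − c) holds with γ > 0. Then ⟨(1/(γρ))(λ − λ⁺), λ⁺ − λ* + ((γ−1)/γ)(λ − λ⁺)⟩ + ∑_{i=1}^N (x_i⁺ − x_i*)ᵀ(ρA_iᵀA_i + P_i)(x_i − x_i⁺) ≥ α ∑_{i=1}^N ‖x_i⁺ − x_i*‖² + (1/γ)⟨λ − λ⁺, ∑_{i=1}^N A_i(x_i − x_i⁺)⟩. -/
import Mathlib
open Matrix Finset RealInnerProductSpace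

noncomputable def mv {a b : ℕ} (A : Matrix (Fin a) (Fin b) ℝ)
    (x : EuclideanSpace ℝ (Fin b)) : EuclideanSpace ℝ (Fin a) :=
  Matrix.toEuclideanLin A x

noncomputable def qf {a : ℕ} (M : Matrix (Fin a) (Fin a) ℝ)
    (x : EuclideanSpace ℝ (Fin a)) : ℝ := ⟪x, mv M x⟫

noncomputable def opN {a b : ℕ} (A : Matrix (Fin a) (Fin b) ℝ) : ℝ :=
  ‖(LinearMap.toContinuousLinearMap (Matrix.toEuclideanLin A))‖

lemma mv_sub {a b : ℕ} (A : Matrix (Fin a) (Fin b) ℝ) (x y : EuclideanSpace ℝ (Fin b)) :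
    mv A (x - y) = mv A x - mv A y := map_sub _ _ _

lemma mv_matadd {a b : ℕ} (A B : Matrix (Fin a) (Fin b) ℝ) (x : EuclideanSpace ℝ (Fin b)) :
    mv (A + B) x = mv A x + mv B x := by
  simp [mv, map_add]

lemma mv_matsmul {a b : ℕ} (r : ℝ) (A : Matrix (Fin a) (Fin b) ℝ) (x : EuclideanSpace ℝ (Fin b)) :
    mv (r • A) x = r • mv A x := by
  simp [mv, _root_.map_smul]

lemma mv_mul {a b c : ℕ} (A : Matrix (Fin a) (Fin b) ℝ) (B : Matrix (Fin b) (Fin c) ℝ)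
    (x : EuclideanSpace ℝ (Fin c)) : mv (A * B) x = mv A (mv B x) := by
  simp [mv, Matrix.toEuclideanLin_apply, Matrix.mulVec_mulVec]

lemma inner_mv_transpose {a b : ℕ} (A : Matrix (Fin a) (Fin b) ℝ)
    (y : EuclideanSpace ℝ (Fin a)) (x : EuclideanSpace ℝ (Fin b)) :
    ⟪x, mv Aᵀ y⟫ = ⟪mv A x, y⟫ := by
  have : (Aᵀ : Matrix (Fin b) (Fin a) ℝ) = A.conjTranspose := by
    ext i j; simp [Matrix.conjTranspose]
  rw [mv, this, Matrix.toEuclideanLin_conjTranspose_eq_adjoint]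
  rw [real_inner_comm, LinearMap.adjoint_inner_left, mv, real_inner_comm]

/-- the inequality (eq-1-3), incorporating the dual update. -/
theorem stmt4 {N m : ℕ} (n : Fin N → ℕ)
    (f : (i : Fin N) → EuclideanSpace ℝ (Fin (n i)) → ℝ)
    (g : (i : Fin N) → EuclideanSpace ℝ (Fin (n i)) → EuclideanSpace ℝ (Fin (n i)))
    (hdiff : ∀ i x, HasGradientAt (f i) (g i x) x)
    (α : ℝ) (hα : 0 < α)
    (hsc : ∀ i x y, f i y ≥ f i x + ⟪y - x, g i x⟫ + α * ‖x - y‖ ^ 2)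
    (A : (i : Fin N) → Matrix (Fin m) (Fin (n i)) ℝ)
    (c : EuclideanSpace ℝ (Fin m))
    (ρ γ : ℝ) (hρ : 0 < ρ) (hγ : 0 < γ)
    (P : (i : Fin N) → Matrix (Fin (n i)) (Fin (n i)) ℝ)
    (hP : ∀ i, (P i).PosSemidef)
    (xstar : (i : Fin N) → EuclideanSpace ℝ (Fin (n i)))
    (lamstar : EuclideanSpace ℝ (Fin m))
    (hkkt1 : ∀ i, g i (xstar i) = mv (A i)ᵀ lamstar)
    (hkkt2 : ∑ i, mv (A i) (xstar i) = c)
    (x xp : (i : Fin N) → EuclideanSpace ℝ (Fin (n i)))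
    (lam lamp : EuclideanSpace ℝ (Fin m))
    (hopt : ∀ i, g i (xp i) = mv (A i)ᵀ lam
        - ρ • mv (A i)ᵀ (mv (A i) (xp i) + (∑ j ∈ Finset.univ.erase i, mv (A j) (x j)) - c)
        + mv (P i) (x i - xp i))
    (hdual : lamp = lam - (γ * ρ) • ((∑ i, mv (A i) (xp i)) - c)) :
    ⟪(1 / (γ * ρ)) • (lam - lamp), lamp - lamstar + ((γ - 1) / γ) • (lam - lamp)⟫
        + ∑ i, ⟪xp i - xstar i, mv (ρ • ((A i)ᵀ * A i) + P i) (x i - xp i)⟫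
      ≥ α * ∑ i, ‖xp i - xstar i‖ ^ 2
        + (1 / γ) * ⟪lam - lamp, ∑ i, mv (A i) (x i - xp i)⟫ := by
  have hγρ : γ * ρ ≠ 0 := by positivity
  set r : EuclideanSpace ℝ (Fin m) := (∑ i, mv (A i) (xp i)) - c with hr
  set S : EuclideanSpace ℝ (Fin m) := ∑ i, mv (A i) (x i - xp i) with hS
  have hlam : lam - lamp = (γ * ρ) • r := by rw [hdual]; abel
  -- monotonicity
  have hmono : ∀ i, ⟪xp i - xstar i, g i (xp i) - g i (xstar i)⟫
      ≥ 2 * α * ‖xp i - xstar i‖ ^ 2 := by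
    intro i
    have h1 := hsc i (xp i) (xstar i)
    have h2 := hsc i (xstar i) (xp i)
    have hn : ‖xstar i - xp i‖ = ‖xp i - xstar i‖ := norm_sub_rev _ _
    have e1 : ⟪xstar i - xp i, g i (xp i)⟫ = -⟪xp i - xstar i, g i (xp i)⟫ := by
      rw [← inner_neg_left]; congr 1; abel
    rw [inner_sub_right]
    rw [hn] at h2
    rw [e1] at h1
    linarith
  -- sum of A_i d_i equals r
  have hsum_d : ∑ i, mv (A i) (xp i - xstar i) = r := by
    simp_rw [mv_sub]
    rw [Finset.sum_sub_distrib, hkkt2, hr]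
  -- rewrite the argument of the transpose
  have hB : ∀ i, mv (A i) (xp i) + (∑ j ∈ Finset.univ.erase i, mv (A j) (x j)) - c
      = r + S - mv (A i) (x i - xp i) := by
    intro i
    have e1 : ∑ j, mv (A j) (xp j)
        = mv (A i) (xp i) + ∑ j ∈ Finset.univ.erase i, mv (A j) (xp j) :=
      (Finset.add_sum_erase _ _ (Finset.mem_univ i)).symm
    have e2 : S = ∑ j ∈ Finset.univ.erase i, (mv (A j) (x j) - mv (A j) (xp j))
        + (mv (A i) (x i) - mv (A i) (xp i)) := by
      rw [hS]; simp_rw [mv_sub]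
      exact (Finset.sum_erase_add _ _ (Finset.mem_univ i)).symm
    rw [hr, e1, e2, Finset.sum_sub_distrib, mv_sub]
    abel
  -- key per-i identity
  have key : ∀ i, ⟪xp i - xstar i, g i (xp i) - g i (xstar i)⟫
      = ⟪mv (A i) (xp i - xstar i), lam - lamstar⟫
        - ρ * ⟪mv (A i) (xp i - xstar i), r⟫
        - ρ * ⟪mv (A i) (xp i - xstar i), S⟫
        + ⟪xp i - xstar i, mv (ρ • ((A i)ᵀ * A i) + P i) (x i - xp i)⟫ := by
    intro i
    rw [hopt i, hkkt1 i, hB i]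
    simp only [mv_matadd, mv_matsmul, mv_mul, inner_sub_right, inner_add_right,
      real_inner_smul_right, inner_mv_transpose, mv_sub, inner_sub_left]
    ring
  -- first term of LHS
  have hfirst : (1 / (γ * ρ)) • (lam - lamp) = r := by
    rw [hlam, smul_smul, one_div, inv_mul_cancel₀ hγρ, one_smul]
  have hsecond : lamp - lamstar + ((γ - 1) / γ) • (lam - lamp)
      = (lam - lamstar) - ρ • r := by
    have hc : (γ - 1) / γ * (γ * ρ) = γ * ρ - ρ := by
      field_simp
    rw [hdual, sub_sub_cancel, smul_smul, hc, sub_smul]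
    abel
  have hRHS2 : (1 / γ) * ⟪lam - lamp, S⟫ = ρ * ⟪r, S⟫ := by
    rw [hlam, real_inner_smul_left]
    field_simp
  rw [hfirst, hsecond, hRHS2]
  -- sum the key identity
  have hsumkey : ∑ i, ⟪xp i - xstar i, g i (xp i) - g i (xstar i)⟫
      = ⟪r, lam - lamstar⟫ - ρ * ⟪r, r⟫ - ρ * ⟪r, S⟫
        + ∑ i, ⟪xp i - xstar i, mv (ρ • ((A i)ᵀ * A i) + P i) (x i - xp i)⟫ := by
    simp_rw [key]
    rw [Finset.sum_add_distrib, Finset.sum_sub_distrib, Finset.sum_sub_distrib,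
      ← Finset.mul_sum, ← Finset.mul_sum, ← sum_inner, ← sum_inner, ← sum_inner, hsum_d]
  have hmonos : ∑ i, ⟪xp i - xstar i, g i (xp i) - g i (xstar i)⟫
      ≥ ∑ i, 2 * α * ‖xp i - xstar i‖ ^ 2 :=
    Finset.sum_le_sum fun i _ => hmono i
  have hnn : (0:ℝ) ≤ ∑ i, ‖xp i - xstar i‖ ^ 2 :=
    Finset.sum_nonneg fun i _ => sq_nonneg _
  rw [inner_sub_right, real_inner_smul_right]
  rw [← Finset.mul_sum] at hmonos
  nlinarith [hmonos, hsumkey]
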